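/- arXiv:0812.0146 — 2 statements merged into one kernel-verified Lean document; each statement's English description precedes it below -/
import Mathlib

section
/- Let 𝒜 be a concept class on a set Ω with VC dimension at most p ≥ 1, and let h ≥ 1. Then the class of all sets obtained as intersections of at most h sets, each of which is either a member of 𝒜 or the complement of a member of 𝒜, has VC dimension at most 4hp·log₂(2hp). -/
open scoped Classical

/-- A family `𝒜` of subsets of `Ω` shatters a finite set `B` if every subset of `B`
is cut out by a member of `𝒜`. -/
def Shatters {Ω : Type*} (𝒜 : Set (Set Ω)) (B : Finset Ω) : Prop :=
  ∀ C ⊆ B, ∃ A ∈ 𝒜, A ∩ (B : Set Ω) = (C : Set Ω)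

/-- The class of sets obtained as intersections of at most `h` sets, each of which is a
member of `𝒜` or a complement of a member of `𝒜`. -/
def InterClass {Ω : Type*} (𝒜 : Set (Set Ω)) (h : ℕ) : Set (Set Ω) :=
  {S | ∃ T : Finset (Set Ω), T.card ≤ h ∧
      (∀ A ∈ T, A ∈ 𝒜 ∨ ∃ A' ∈ 𝒜, A = A'ᶜ) ∧ S = ⋂₀ (T : Set (Set Ω))}

/-!
Let `d = #B` for a set `B` shattered by `InterClass 𝒜 h`. By Sauer–Shelah, `𝒜` cuts out at most
`(d + 1) ^ p` subsets of `B`, so members of `𝒜` and their complements cut out at most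
`2 (d + 1) ^ p` of them. Each subset of `B` is the intersection of at most `h` of those
traces, and a family of `N` sets has at most `(N + 1) ^ h` subfamilies of size at most `h`, hence
`2 ^ d ≤ (2 (d + 1) ^ p + 1) ^ h`. Taking logarithms and bounding `log (d + 1)` by its tangent
line at `2hp / log 2` turns this into `d ≤ 4hp log₂ (2hp)`.
-/

open scoped Finset

theorem Nat.sum_range_choose_le_add_one_pow (n k : ℕ) :
    ∑ i ∈ Finset.range (k + 1), n.choose i ≤ (n + 1) ^ k := by
  induction k with
  | zero => simp
  | succ k ih =>
    calc ∑ i ∈ Finset.range (k + 2), n.choose i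
        = ∑ i ∈ Finset.range (k + 1), n.choose i + n.choose (k + 1) := Finset.sum_range_succ _ _
      _ ≤ (n + 1) ^ k + n * n ^ k := by
        rw [← pow_succ']; exact add_le_add ih (Nat.choose_le_pow n (k + 1))
      _ ≤ (n + 1) ^ k + n * (n + 1) ^ k := by gcongr; omega
      _ = (n + 1) ^ (k + 1) := by ring

namespace Finset

variable {α : Type*}

theorem card_filter_powerset_card_le_le_pow (s : Finset α) (k : ℕ) :
    #{t ∈ s.powerset | #t ≤ k} ≤ (#s + 1) ^ k :=
  calc #{t ∈ s.powerset | #t ≤ k}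
      ≤ #((range (k + 1)).biUnion fun i => s.powersetCard i) :=
        card_le_card fun t ht => by
          simp only [mem_filter, mem_powerset] at ht
          simpa [mem_powersetCard, Nat.lt_succ_iff] using ht.symm
    _ ≤ ∑ i ∈ range (k + 1), #(s.powersetCard i) := card_biUnion_le
    _ = ∑ i ∈ range (k + 1), (#s).choose i := by simp only [card_powersetCard]
    _ ≤ (#s + 1) ^ k := Nat.sum_range_choose_le_add_one_pow _ _

/-- A form of the Sauer–Shelah lemma. -/
theorem card_le_add_one_pow_of_forall_shatters {𝒜 : Finset (Finset α)} {s : Finset α} {k : ℕ}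
    (h𝒜 : ∀ t ∈ 𝒜, t ⊆ s) (hk : ∀ t, 𝒜.Shatters t → #t ≤ k) : #𝒜 ≤ (#s + 1) ^ k :=
  calc #𝒜 ≤ #𝒜.shatterer := card_le_card_shatterer 𝒜
    _ ≤ #{t ∈ s.powerset | #t ≤ k} := card_le_card fun t ht => by
        rw [mem_shatterer] at ht
        obtain ⟨u, hu, htu⟩ := ht.exists_superset
        simpa using ⟨htu.trans (h𝒜 u hu), hk t ht⟩
    _ ≤ (#s + 1) ^ k := card_filter_powerset_card_le_le_pow s k

end Finset

section Trace

variable {Ω : Type*}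

noncomputable def traceOn (𝒜 : Set (Set Ω)) (B : Finset Ω) : Finset (Finset Ω) :=
  {C ∈ B.powerset | ∃ A ∈ 𝒜, A ∩ ↑B = ↑C}

variable {𝒜 : Set (Set Ω)}

theorem filter_mem_traceOn {A : Set Ω} (hA : A ∈ 𝒜) (B : Finset Ω) :
    {x ∈ B | x ∈ A} ∈ traceOn 𝒜 B := by
  simp only [traceOn, Finset.mem_filter, Finset.mem_powerset, Finset.filter_subset, true_and]
  exact ⟨A, hA, by ext; simp [and_comm]⟩

theorem shatters_of_shatters_traceOn {B s : Finset Ω} (hs : (traceOn 𝒜 B).Shatters s) :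
    Shatters 𝒜 s := by
  intro C hC
  obtain ⟨u, hu, hsu⟩ := hs hC
  obtain ⟨-, A, hA, hAu⟩ := Finset.mem_filter.1 hu
  have hsB : (s : Set Ω) ⊆ B := by
    obtain ⟨v, hv, hsv⟩ := hs.exists_superset
    exact Finset.coe_subset.2 (hsv.trans (Finset.mem_powerset.1 (Finset.mem_filter.1 hv).1))
  refine ⟨A, hA, ?_⟩
  rw [← hsu, Finset.coe_inter, ← hAu, ← Set.inter_eq_right.2 hsB]
  ext; simp only [Set.mem_inter_iff]; tauto

theorem card_traceOn_le {p : ℕ} (hvc : ∀ s : Finset Ω, Shatters 𝒜 s → #s ≤ p) (B : Finset Ω) :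
    #(traceOn 𝒜 B) ≤ (#B + 1) ^ p :=
  Finset.card_le_add_one_pow_of_forall_shatters
    (fun _ hC => Finset.mem_powerset.1 (Finset.mem_filter.1 hC).1)
    (fun _ hs => hvc _ (shatters_of_shatters_traceOn hs))

theorem card_traceOn_union_compl_le (B : Finset Ω) :
    #(traceOn (𝒜 ∪ compl '' 𝒜) B) ≤ 2 * #(traceOn 𝒜 B) := by
  have hsub : traceOn (𝒜 ∪ compl '' 𝒜) B ⊆ traceOn 𝒜 B ∪ (traceOn 𝒜 B).image (B \ ·) := by
    intro C hC
    obtain ⟨hCB, A, hA | ⟨A', hA', rfl⟩, hAC⟩ := Finset.mem_filter.1 hC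
    · exact Finset.mem_union_left _ (Finset.mem_filter.2 ⟨hCB, A, hA, hAC⟩)
    · refine Finset.mem_union_right _ (Finset.mem_image.2 ⟨B \ C, ?_, ?_⟩)
      · refine Finset.mem_filter.2 ⟨Finset.mem_powerset.2 Finset.sdiff_subset, A', hA', ?_⟩
        rw [Finset.coe_sdiff, ← hAC]
        ext; simp only [Set.mem_inter_iff, Set.mem_sdiff, Set.mem_compl_iff]; tauto
      · exact Finset.sdiff_sdiff_eq_self (Finset.mem_powerset.1 hCB)
  calc #(traceOn (𝒜 ∪ compl '' 𝒜) B)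
      ≤ #(traceOn 𝒜 B) + #((traceOn 𝒜 B).image (B \ ·)) :=
        (Finset.card_le_card hsub).trans (Finset.card_union_le _ _)
    _ ≤ 2 * #(traceOn 𝒜 B) := by
        have := Finset.card_image_le (s := traceOn 𝒜 B) (f := (B \ ·))
        omega

theorem exists_subset_traceOn_of_mem_interClass {h : ℕ} {S : Set Ω} (hS : S ∈ InterClass 𝒜 h)
    (B : Finset Ω) :
    ∃ U ⊆ traceOn (𝒜 ∪ compl '' 𝒜) B, #U ≤ h ∧ {x ∈ B | x ∈ S} = {x ∈ B | ∀ u ∈ U, x ∈ u} := by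
  obtain ⟨T, hTh, hT𝒜, rfl⟩ := hS
  refine ⟨T.image fun A => {x ∈ B | x ∈ A}, fun u hu => ?_, Finset.card_image_le.trans hTh, ?_⟩
  · obtain ⟨A, hA, rfl⟩ := Finset.mem_image.1 hu
    refine filter_mem_traceOn ?_ B
    rcases hT𝒜 A hA with hA | ⟨A', hA', rfl⟩
    exacts [Or.inl hA, Or.inr ⟨A', hA', rfl⟩]
  · ext x
    simp +contextual

theorem two_pow_card_le_of_shatters_interClass {p h : ℕ}
    (hvc : ∀ s : Finset Ω, Shatters 𝒜 s → #s ≤ p) {B : Finset Ω}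
    (hB : Shatters (InterClass 𝒜 h) B) : 2 ^ #B ≤ (2 * (#B + 1) ^ p + 1) ^ h := by
  set G := traceOn (𝒜 ∪ compl '' 𝒜) B
  have hcover : B.powerset ⊆
      {U ∈ G.powerset | #U ≤ h}.image fun U => {x ∈ B | ∀ u ∈ U, x ∈ u} := by
    intro C hC
    obtain ⟨S, hS, hSC⟩ := hB C (Finset.mem_powerset.1 hC)
    obtain ⟨U, hUG, hUh, hU⟩ := exists_subset_traceOn_of_mem_interClass hS B
    refine Finset.mem_image.2 ⟨U, by simpa using ⟨hUG, hUh⟩, ?_⟩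
    rw [← hU]
    apply Finset.coe_injective
    rw [← hSC]
    ext
    simp [and_comm]
  calc 2 ^ #B = #B.powerset := (Finset.card_powerset B).symm
    _ ≤ #{U ∈ G.powerset | #U ≤ h} := (Finset.card_le_card hcover).trans Finset.card_image_le
    _ ≤ (#G + 1) ^ h := Finset.card_filter_powerset_card_le_le_pow G h
    _ ≤ (2 * (#B + 1) ^ p + 1) ^ h := by
        gcongr
        exact (card_traceOn_union_compl_le B).trans (by gcongr; exact card_traceOn_le hvc B)

end Trace

namespace Real

theorem log_le_div_add_log_sub_one {x a : ℝ} (hx : 0 < x) (ha : 0 < a) :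
    log x ≤ x / a + log a - 1 := by
  have := log_le_sub_one_of_pos (div_pos hx ha)
  rw [log_div hx.ne' ha.ne'] at this
  linarith

theorem mul_log_two_le_of_le_mul_log {h p d : ℝ} (hp : 1 ≤ p) (hhp : 2 ≤ h * p) (hd : 0 ≤ d)
    (hdh : d * log 2 ≤ h * (2 * log 2 + p * log (d + 1))) :
    d * log 2 ≤ 4 * h * p * log (2 * h * p) := by
  have hl : 4 / 7 < log 2 := by linarith [log_two_gt_d9]
  have hl0 : 0 < log 2 := by linarith
  have hloglog : -(3 / 4) ≤ log (log 2) := by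
    have := one_sub_inv_le_log_of_pos hl0
    have : (log 2)⁻¹ < 7 / 4 := by rw [inv_lt_comm₀ hl0 (by norm_num)]; linarith
    linarith
  have hlogm : 2 * log 2 ≤ log (2 * h * p) :=
    calc 2 * log 2 = log 4 := by rw [show (4 : ℝ) = 2 ^ 2 by norm_num, log_pow]; norm_num
      _ ≤ log (2 * h * p) := log_le_log (by norm_num) (by linarith)
  have hm : 0 < 2 * h * p := by linarith
  have hh : 0 < h := by nlinarith
  -- the tangent line of `log` at `2hp / log 2`
  have htan := log_le_div_add_log_sub_one (x := d + 1) (by linarith) (div_pos hm hl0)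
  rw [log_div hm.ne' hl0.ne'] at htan
  have key : h * p * log (d + 1) ≤
      (d + 1) * log 2 / 2 + h * p * (log (2 * h * p) - log (log 2) - 1) := by
    have hdiv : h * p * ((d + 1) / (2 * h * p / log 2)) = (d + 1) * log 2 / 2 := by
      field_simp
    nlinarith [mul_le_mul_of_nonneg_left htan (by linarith : 0 ≤ h * p)]
  have hlinear : 2 * h * log 2 ≤ h * p * log (2 * h * p) := by
    nlinarith [mul_le_mul_of_nonneg_left hlogm (by linarith : 0 ≤ h * p),
      mul_nonneg (mul_nonneg (sub_nonneg.2 hp) hh.le) hl0.le]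
  have hconst : log 2 / 2 ≤ h * p * (log (log 2) + 1) := by
    nlinarith [log_two_lt_d9]
  linarith

end Real

open Real in
theorem le_four_mul_mul_logb_of_two_pow_le {p h d : ℕ} (hp : 1 ≤ p)
    (hd : 2 ^ d ≤ (2 * (d + 1) ^ p + 1) ^ h) : (d : ℝ) ≤ 4 * h * p * logb 2 (2 * h * p) := by
  rcases Nat.lt_or_ge (h * p) 2 with hsmall | hbig
  · have hh : h ≤ 1 := by nlinarith
    interval_cases h
    · have := d.lt_two_pow_self
      simp only [pow_zero] at hd
      simp [show d = 0 by omega]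
    -- for `h = p = 1` the tangent-line bound is too weak, but `2 ^ d ≤ 2d + 3` forces `d ≤ 3`
    · obtain rfl : p = 1 := by omega
      have hd3 : d ≤ 3 := by
        by_contra! hd4
        have hsplit : 2 ^ d = 2 ^ 3 * 2 ^ (d - 3) := by rw [← pow_add]; congr; omega
        have := (d - 3).lt_two_pow_self
        simp only [pow_one] at hd
        omega
      simpa using (show (d : ℝ) ≤ 4 by exact_mod_cast hd3.trans (by norm_num))
  · have hlog : (d : ℝ) * log 2 ≤ h * (2 * log 2 + p * log (d + 1)) := by
      have hle : ((2 : ℕ) ^ d : ℝ) ≤ (2 ^ 2 * ((d : ℝ) + 1) ^ p) ^ h := by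
        have : 1 ≤ (d + 1) ^ p := Nat.one_le_pow _ _ d.succ_pos
        exact_mod_cast hd.trans (Nat.pow_le_pow_left (by omega) h)
      have := log_le_log (by positivity) hle
      rwa [Nat.cast_ofNat, log_pow, log_pow, log_mul (by positivity) (by positivity), log_pow,
        log_pow] at this
    rw [logb, ← mul_div_assoc, le_div_iff₀ (log_pos one_lt_two)]
    exact mul_log_two_le_of_le_mul_log (by exact_mod_cast hp) (by exact_mod_cast hbig)
      d.cast_nonneg hlog

theorem vc_dim_intersections_general {Ω : Type*} (𝒜 : Set (Set Ω)) (p h : ℕ)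
    (hp : 1 ≤ p)
    (hvc : ∀ B : Finset Ω, Shatters 𝒜 B → B.card ≤ p) :
    ∀ B : Finset Ω, Shatters (InterClass 𝒜 h) B →
      (B.card : ℝ) ≤ 4 * h * p * Real.logb 2 (2 * h * p) :=
  fun _ hB => le_four_mul_mul_logb_of_two_pow_le hp (two_pow_card_le_of_shatters_interClass hvc hB)

/-- If `𝒜` has VC dimension at most `p`, then the class of intersections of at most `h`
members of `𝒜` or complements of members of `𝒜` has VC dimension at most
`4hp·log₂(2hp)`. -/
theorem vc_dim_intersections {Ω : Type*} (𝒜 : Set (Set Ω)) (p h : ℕ)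
    (hp : 1 ≤ p) (hh : 1 ≤ h)
    (hvc : ∀ B : Finset Ω, Shatters 𝒜 B → B.card ≤ p) :
    ∀ B : Finset Ω, Shatters (InterClass 𝒜 h) B →
      (B.card : ℝ) ≤ 4 * h * p * Real.logb 2 (2 * h * p) :=
  vc_dim_intersections_general 𝒜 p h hp hvc
end

section
/- Let (Ω, ρ, μ) be a metric probability space with concentration function α, and let C be a measurable subset of Ω with μ(C) = 1/2 partitioned as C = A ∪ B with μ(A) = μ(B) = μ(C)/2 (disjoint up to null sets). Then for every ε > 0, the set of points ω ∈ C lying within distance ε of both A and B has μ_C-measure at least 1 − 2·α_C(ε), where α_C is the concentration function of C with the induced metric and normalized measure μ_C = μ(· ∩ C)/μ(C). -/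
/-!
Since `A` and `B` are halves of `C`, each of `A_ε ∩ C` and `B_ε ∩ C` has `μ_C`-measure at least
`1 − α_C(ε)`. They contain `A` and `B` respectively, so together they cover `C`, and
inclusion–exclusion bounds the measure of their intersection below by `1 − 2 α_C(ε)`.
-/

open MeasureTheory Metric

/-- The concentration function of a subset `C ⊆ Ω` equipped with the induced metric and
the normalized restricted measure `μ_C = μ(· ∩ C)/μ(C)`.  (In the induced metric, the
open `ε`-neighbourhood of `A ⊆ C` inside `C` is `A_ε ∩ C`.) -/
noncomputable def subConcFn {Ω : Type*} [PseudoMetricSpace Ω] [MeasurableSpace Ω]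
    (μ : Measure Ω) (C : Set Ω) (ε : ℝ) : ℝ :=
  1 - sInf {r : ℝ | ∃ A : Set Ω, A ⊆ C ∧ MeasurableSet A ∧
      (μ A).toReal / (μ C).toReal ≥ 1/2 ∧
      (μ (Metric.thickening ε A ∩ C)).toReal / (μ C).toReal = r}

/- Inclusion–exclusion for `X ∩ C` and `Y ∩ C` with `C = A ∪ B`, which needs no measurability
of `X` and `Y` (thickenings need not be measurable): every set is split along `A` instead. -/
lemma measure_inter_union_add_measure_inter_union_le {α : Type*} [MeasurableSpace α]
    (μ : Measure α) {A B X Y : Set α} (hA : MeasurableSet A) (hAX : A ⊆ X) (hBY : B ⊆ Y) :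
    μ (X ∩ (A ∪ B)) + μ (Y ∩ (A ∪ B)) ≤ μ (X ∩ Y ∩ (A ∪ B)) + μ A + μ B + μ (A ∩ B) := by
  have hsplit : μ (X ∩ Y ∩ (A ∪ B)) = μ (A ∩ Y) + μ ((X ∩ B) \ A) := by
    rw [← measure_inter_add_sdiff _ hA]
    congr 2 <;> ext x <;> grind
  have hX : μ (X ∩ (A ∪ B)) ≤ μ ((X ∩ B) \ A) + μ (A ∩ B) + μ A :=
    (measure_mono (fun x => by grind)).trans
      ((measure_union_le _ _).trans (add_le_add_left (measure_union_le _ _) _))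
  have hY : μ (Y ∩ (A ∪ B)) ≤ μ (A ∩ Y) + μ B :=
    (measure_mono (fun x => by grind)).trans (measure_union_le _ _)
  calc _ ≤ μ ((X ∩ B) \ A) + μ (A ∩ B) + μ A + (μ (A ∩ Y) + μ B) := add_le_add hX hY
    _ = _ := by rw [hsplit]; ring

lemma one_sub_subConcFn_le {Ω : Type*} [PseudoMetricSpace Ω] [MeasurableSpace Ω]
    (μ : Measure Ω) {C A : Set Ω} (hAC : A ⊆ C) (hA : MeasurableSet A)
    (hhalf : (μ A).toReal / (μ C).toReal ≥ 1 / 2) (ε : ℝ) :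
    1 - subConcFn μ C ε ≤ (μ (thickening ε A ∩ C)).toReal / (μ C).toReal := by
  rw [subConcFn, sub_sub_cancel]
  refine csInf_le ⟨0, ?_⟩ ⟨A, hAC, hA, hhalf, rfl⟩
  rintro r ⟨A', -, -, -, rfl⟩
  positivity

theorem branching_lemma_general {Ω : Type*} [PseudoMetricSpace Ω] [MeasurableSpace Ω]
    (μ : Measure Ω) [IsProbabilityMeasure μ] (C A B : Set Ω)
    (hAmeas : MeasurableSet A) (hBmeas : MeasurableSet B)
    (hC : (μ C).toReal = 1/2) (hAB : C = A ∪ B) (hnull : (μ (A ∩ B)).toReal = 0)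
    (hA : (μ A).toReal = (μ C).toReal / 2) (hB : (μ B).toReal = (μ C).toReal / 2) :
    ∀ ε : ℝ, 0 < ε →
      (μ {ω ∈ C | (∃ a ∈ A, dist ω a < ε) ∧ ∃ b ∈ B, dist ω b < ε}).toReal
          / (μ C).toReal ≥ 1 - 2 * subConcFn μ C ε := by
  intro ε hε
  have hset : {ω ∈ C | (∃ a ∈ A, dist ω a < ε) ∧ ∃ b ∈ B, dist ω b < ε} =
      thickening ε A ∩ thickening ε B ∩ C := by
    ext ω
    simp only [Set.mem_ofPred_eq, Set.mem_inter_iff, mem_thickening_iff]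
    tauto
  have hcover := measure_inter_union_add_measure_inter_union_le μ hAmeas
    (self_subset_thickening hε A) (self_subset_thickening hε B)
  rw [← hAB] at hcover
  replace hcover := ENNReal.toReal_mono (by finiteness) hcover
  simp only [ENNReal.toReal_add, measure_ne_top, ne_eq, ENNReal.add_eq_top, or_self,
    not_false_eq_true] at hcover
  have hαA := one_sub_subConcFn_le μ (hAB ▸ Set.subset_union_left) hAmeas
    (by rw [hA, hC]; norm_num) ε
  have hαB := one_sub_subConcFn_le μ (hAB ▸ Set.subset_union_right) hBmeas
    (by rw [hB, hC]; norm_num) ε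
  rw [hset]
  rw [hC] at hαA hαB hA hB ⊢
  linarith

/-- Branching lemma: if a node `C` of measure `1/2` is split into halves `A` and `B`
(each of measure `μ(C)/2`, disjoint up to null sets), then for every `ε > 0` the set of
query points `ω ∈ C` within distance `ε` of both `A` and `B` has normalized measure at
least `1 − 2·α_C(ε)`; at all such points the search must branch into both children. -/
theorem branching_lemma {Ω : Type*} [PseudoMetricSpace Ω] [MeasurableSpace Ω]
    (μ : Measure Ω) [IsProbabilityMeasure μ] (C A B : Set Ω)
    (hCmeas : MeasurableSet C) (hAmeas : MeasurableSet A) (hBmeas : MeasurableSet B)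
    (hC : (μ C).toReal = 1/2) (hAB : C = A ∪ B) (hnull : (μ (A ∩ B)).toReal = 0)
    (hA : (μ A).toReal = (μ C).toReal / 2) (hB : (μ B).toReal = (μ C).toReal / 2) :
    ∀ ε : ℝ, 0 < ε →
      (μ {ω ∈ C | (∃ a ∈ A, dist ω a < ε) ∧ ∃ b ∈ B, dist ω b < ε}).toReal
          / (μ C).toReal ≥ 1 - 2 * subConcFn μ C ε :=
  branching_lemma_general μ C A B hAmeas hBmeas hC hAB hnull hA hB
end
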